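/- Let μ ≥ 2 be an even integer, W a positive integer, V = sin(π/μ)/W, ζ > 0, ω > 0, κ > 0, and c ≥ 0. Let A be a random variable with density f_A(α) = (μ/(2π))·√(V²/(ζα − V²α²)) on [cos²(π/μ)·ζ/V², ζ/V²] (zero elsewhere), and let B̃ be an independent random variable with density f_B(x) = (1/(Φ(ω/κ)·√(2πκ²)))·exp(−(x − ω − c)²/(2κ²)) for x ≥ c (zero elsewhere). Then for every γ > 0 satisfying cos²(π/μ)·ζ/(γV²) ≥ c, the outage probability satisfies P(A/B̃ ≤ γ) = 1/Φ(ω/κ) − (μ/(2π·Φ(ω/κ)))·∫_{cos²(π/μ)·ζ/V²}^{ζ/V²} √(V²/(ζα − V²α²)) · Φ((α/γ − ω − c)/κ) dα. -/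

import Mathlib

open Real MeasureTheory ProbabilityTheory

/-- The standard normal cumulative distribution function
`Φ(x) = (1/√(2π)) ∫_{-∞}^x e^{-y²/2} dy`. -/
noncomputable def stdNormalCDF (x : ℝ) : ℝ :=
  (Real.sqrt (2 * Real.pi))⁻¹ * ∫ y in Set.Iic x, Real.exp (-(y ^ 2) / 2)

/-!
Since `B̃ > 0` almost surely, the event `A / B̃ ≤ γ` is `A ≤ γ B̃`, and independence together
with Fubini gives `P(A / B̃ ≤ γ) = ∫ f_A(α) P(B̃ ≥ α / γ) dα`. The condition on `γ` makes
`α / γ ≥ c` on the support of `f_A`, where the tail of the truncated Gaussian is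
`(1 - Φ((α / γ - ω - c) / κ)) / Φ(ω / κ)`; since `f_A` integrates to `1`, the formula follows.
-/

open Set

section StdNormal

lemma exp_neg_sq_div_two_eq (y : ℝ) : exp (-(y ^ 2) / 2) = exp (-(1 / 2) * y ^ 2) := by
  ring_nf

lemma integrable_exp_neg_sq_div_two : Integrable fun y : ℝ => exp (-(y ^ 2) / 2) := by
  simpa only [exp_neg_sq_div_two_eq] using integrable_exp_neg_mul_sq (b := 1 / 2) (by norm_num)

lemma integral_exp_neg_sq_div_two : ∫ y : ℝ, exp (-(y ^ 2) / 2) = √(2 * π) := by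
  simp only [exp_neg_sq_div_two_eq, integral_gaussian]
  norm_num [div_div_eq_mul_div, mul_comm]

lemma stdNormalCDF_pos (x : ℝ) : 0 < stdNormalCDF x := by
  refine mul_pos (by positivity) ?_
  rw [setIntegral_pos_iff_support_of_nonneg_ae (ae_of_all _ fun y => (exp_pos _).le)
    integrable_exp_neg_sq_div_two.integrableOn]
  simp [Function.support, (exp_pos _).ne']

lemma stdNormalCDF_le_one (x : ℝ) : stdNormalCDF x ≤ 1 := by
  have hle := setIntegral_le_integral (s := Iic x) integrable_exp_neg_sq_div_two
    (ae_of_all _ fun y => (exp_pos _).le)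
  rw [integral_exp_neg_sq_div_two] at hle
  calc stdNormalCDF x ≤ (√(2 * π))⁻¹ * √(2 * π) := by unfold stdNormalCDF; gcongr
    _ = 1 := inv_mul_cancel₀ (by positivity)

lemma monotone_stdNormalCDF : Monotone stdNormalCDF := fun x y hxy => by
  refine mul_le_mul_of_nonneg_left ?_ (by positivity)
  exact setIntegral_mono_set integrable_exp_neg_sq_div_two.integrableOn
    (ae_of_all _ fun z => (exp_pos _).le) (Iic_subset_Iic.2 hxy).eventuallyLE

lemma integral_Ioi_exp_neg_sq_div_two (u : ℝ) :
    ∫ y in Ioi u, exp (-(y ^ 2) / 2) = √(2 * π) * (1 - stdNormalCDF u) := by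
  have hsplit := intervalIntegral.integral_Iic_add_Ioi (b := u)
    integrable_exp_neg_sq_div_two.integrableOn integrable_exp_neg_sq_div_two.integrableOn
  rw [integral_exp_neg_sq_div_two] at hsplit
  rw [stdNormalCDF, mul_sub, mul_one, mul_inv_cancel_left₀ (by positivity)]
  linarith

lemma integral_Ioi_exp_neg_sub_sq_div {κ : ℝ} (hκ : 0 < κ) (m s : ℝ) :
    ∫ x in Ioi s, exp (-(x - m) ^ 2 / (2 * κ ^ 2))
      = κ * √(2 * π) * (1 - stdNormalCDF ((s - m) / κ)) := by
  have hshift : ∫ x in Ioi s, exp (-(x - m) ^ 2 / (2 * κ ^ 2))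
      = ∫ x in Ioi (s - m), exp (-x ^ 2 / (2 * κ ^ 2)) := by
    simpa using (measurePreserving_sub_right volume m).setIntegral_preimage_emb
      (measurableEmbedding_subRight m) (fun x => exp (-x ^ 2 / (2 * κ ^ 2))) (Ioi (s - m))
  have hscale := integral_comp_mul_left_Ioi (fun x => exp (-x ^ 2 / (2 * κ ^ 2))) ((s - m) / κ) hκ
  have hexp (y : ℝ) : exp (-(κ * y) ^ 2 / (2 * κ ^ 2)) = exp (-(y ^ 2) / 2) := by
    congr 1; field_simp
  simp only [hexp, mul_div_cancel₀ _ hκ.ne', smul_eq_mul] at hscale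
  rw [hshift, ← mul_inv_cancel_left₀ hκ.ne' (∫ x in Ioi (s - m), _), ← hscale,
    integral_Ioi_exp_neg_sq_div_two, mul_assoc]

end StdNormal

section Laws

variable {Ω : Type*} [MeasurableSpace Ω] {P : Measure Ω}

lemma withDensity_ofReal_ne_zero {ρ : ℝ → ℝ} (hρ : Measurable ρ) {u v : ℝ} (huv : u < v)
    (hpos : ∀ x ∈ Ioo u v, 0 < ρ x) :
    volume.withDensity (fun x => ENNReal.ofReal (ρ x)) ≠ 0 := by
  intro h
  have hnull : volume.withDensity (fun x => ENNReal.ofReal (ρ x)) (Ioo u v) = 0 := by simp [h]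
  rw [withDensity_apply _ measurableSet_Ioo, lintegral_eq_zero_iff hρ.ennreal_ofReal] at hnull
  have hfalse : ∀ᵐ x ∂volume.restrict (Ioo u v), False := by
    filter_upwards [hnull, ae_restrict_mem measurableSet_Ioo] with x hx hmem
    simp only [Pi.zero_apply, ENNReal.ofReal_eq_zero] at hx
    exact (hpos x hmem).not_ge hx
  rw [Filter.eventually_false_iff_eq_bot, ae_eq_bot, Measure.restrict_eq_zero,
    Real.volume_Ioo, ENNReal.ofReal_eq_zero] at hfalse
  linarith

lemma aemeasurable_of_map_eq_withDensity {X : Ω → ℝ} {ρ : ℝ → ℝ}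
    (hlaw : P.map X = volume.withDensity (fun x => ENNReal.ofReal (ρ x))) (hρ : Measurable ρ)
    {u v : ℝ} (huv : u < v) (hpos : ∀ x ∈ Ioo u v, 0 < ρ x) : AEMeasurable X P := by
  by_contra hX
  rw [Measure.map_of_not_aemeasurable hX] at hlaw
  exact withDensity_ofReal_ne_zero hρ huv hpos hlaw.symm

lemma ae_pos_of_map_eq_withDensity {B : Ω → ℝ} {ρ : ℝ → ℝ} (hB : AEMeasurable B P)
    (hlaw : P.map B = volume.withDensity (fun x => ENNReal.ofReal (ρ x)))
    (hρ : ∀ x < 0, ρ x = 0) : ∀ᵐ x ∂P, 0 < B x := by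
  have hIic : P.map B (Iic 0) = 0 := by
    rw [hlaw, withDensity_apply _ measurableSet_Iic, Measure.restrict_congr_set Iio_ae_eq_Iic.symm]
    exact setLIntegral_eq_zero measurableSet_Iio fun x hx => by simp [hρ x hx]
  rw [Measure.map_apply_of_aemeasurable hB measurableSet_Iic] at hIic
  exact ae_iff.2 (by simp only [not_lt]; exact hIic)

lemma ProbabilityTheory.IndepFun.measure_div_le_eq_lintegral [IsFiniteMeasure P] {A B : Ω → ℝ}
    (hAB : IndepFun A B P) (hA : AEMeasurable A P) (hB : AEMeasurable B P)
    (hBpos : ∀ᵐ x ∂P, 0 < B x) {γ : ℝ} (hγ : 0 < γ) :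
    P {x | A x / B x ≤ γ} = ∫⁻ α, P.map B (Ici (α / γ)) ∂P.map A := by
  have hS : MeasurableSet {p : ℝ × ℝ | p.1 ≤ γ * p.2} :=
    measurableSet_le measurable_fst (measurable_const.mul measurable_snd)
  have hdiv : P {x | A x / B x ≤ γ} = P ((fun x => (A x, B x)) ⁻¹' {p | p.1 ≤ γ * p.2}) := by
    refine measure_congr ?_
    filter_upwards [hBpos] with x hx
    exact propext (div_le_iff₀ hx)
  have hsection (α : ℝ) : Prod.mk α ⁻¹' {p : ℝ × ℝ | p.1 ≤ γ * p.2} = Ici (α / γ) := by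
    ext x
    simp [div_le_iff₀ hγ, mul_comm]
  rw [hdiv, ← Measure.map_apply_of_aemeasurable (hA.prodMk hB) hS,
    (indepFun_iff_map_prod_eq_prod_map_map hA hB).1 hAB, Measure.prod_apply hS]
  simp only [hsection]

lemma toReal_lintegral_withDensity_ofReal_eq_integral_mul {ρ T : ℝ → ℝ} {g : ℝ → ENNReal}
    (hρ : Measurable ρ) (hρ0 : ∀ x, 0 ≤ ρ x) (hT : Measurable T) (hT0 : ∀ x, 0 ≤ T x)
    (hgT : ∀ x, ρ x ≠ 0 → g x = ENNReal.ofReal (T x)) :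
    (∫⁻ x, g x ∂volume.withDensity (fun x => ENNReal.ofReal (ρ x))).toReal
      = ∫ x, ρ x * T x := by
  have hmul (x : ℝ) : ENNReal.ofReal (ρ x) * g x = ENNReal.ofReal (ρ x * T x) := by
    by_cases hx : ρ x = 0
    · simp [hx]
    · rw [hgT x hx, ENNReal.ofReal_mul (hρ0 x)]
  rw [lintegral_withDensity_eq_lintegral_mul_non_measurable _ hρ.ennreal_ofReal
    (ae_of_all _ fun _ => ENNReal.ofReal_lt_top)]
  simp only [Pi.mul_apply, hmul]
  rw [integral_eq_lintegral_of_nonneg_ae (ae_of_all _ fun x => mul_nonneg (hρ0 x) (hT0 x))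
    (hρ.mul hT).aestronglyMeasurable]

lemma integral_eq_one_of_withDensity_ofReal {ρ : ℝ → ℝ}
    [IsProbabilityMeasure (volume.withDensity fun x => ENNReal.ofReal (ρ x))]
    (hρ : AEStronglyMeasurable ρ) (hρ0 : ∀ x, 0 ≤ ρ x) : ∫ x, ρ x = 1 := by
  have hmass := measure_univ (μ := volume.withDensity fun x => ENNReal.ofReal (ρ x))
  rw [withDensity_apply _ MeasurableSet.univ, Measure.restrict_univ] at hmass
  rw [integral_eq_lintegral_of_nonneg_ae (ae_of_all _ hρ0) hρ, hmass, ENNReal.toReal_one]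

lemma integral_mul_one_sub_of_integral_eq_one {ρ h : ℝ → ℝ} (hρ : ∫ x, ρ x = 1)
    (hh : AEStronglyMeasurable h) {C : ℝ} (hC : ∀ x, |h x| ≤ C) :
    ∫ x, ρ x * (1 - h x) = 1 - ∫ x, ρ x * h x := by
  have hρi : Integrable ρ := .of_integral_ne_zero (by simp [hρ])
  have hρh : Integrable fun x => ρ x * h x := by
    simpa only [mul_comm] using hρi.bdd_mul hh (ae_of_all _ hC)
  simp only [mul_sub, mul_one]
  rw [integral_sub hρi hρh, hρ]

end Laws

section Densities

-- `f_A`, and below `f_B` with its normalising constant `Φ(ω / κ)` generalised to `Z`.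
noncomputable def signalPowerDensity (μn : ℕ) (V ζ α : ℝ) : ℝ :=
  if α ∈ Icc (cos (π / μn) ^ 2 * ζ / V ^ 2) (ζ / V ^ 2)
    then μn / (2 * π) * √(V ^ 2 / (ζ * α - V ^ 2 * α ^ 2)) else 0

noncomputable def truncGaussianDensity (Z κ ω c x : ℝ) : ℝ :=
  if c ≤ x then (Z * √(2 * π * κ ^ 2))⁻¹ * exp (-(x - ω - c) ^ 2 / (2 * κ ^ 2)) else 0

variable {μn : ℕ} {V ζ Z κ ω c : ℝ}

lemma signalPowerDensity_nonneg (α : ℝ) : 0 ≤ signalPowerDensity μn V ζ α := by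
  unfold signalPowerDensity
  split_ifs <;> positivity

lemma measurable_signalPowerDensity : Measurable (signalPowerDensity μn V ζ) :=
  Measurable.ite measurableSet_Icc (by fun_prop) measurable_const

lemma mem_Icc_of_signalPowerDensity_ne_zero {α : ℝ} (h : signalPowerDensity μn V ζ α ≠ 0) :
    α ∈ Icc (cos (π / μn) ^ 2 * ζ / V ^ 2) (ζ / V ^ 2) := by
  by_contra hα
  exact h (if_neg hα)

lemma signalPowerDensity_pos (hμ : 0 < μn) (hV : V ≠ 0) (hζ : 0 ≤ ζ) {α : ℝ}
    (hα : α ∈ Ioo (cos (π / μn) ^ 2 * ζ / V ^ 2) (ζ / V ^ 2)) :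
    0 < signalPowerDensity μn V ζ α := by
  have hα0 : 0 < α := lt_of_le_of_lt (by positivity) hα.1
  have hαζ : V ^ 2 * α < ζ := by
    have := hα.2
    rw [lt_div_iff₀ (by positivity)] at this
    linarith
  have hden : 0 < ζ * α - V ^ 2 * α ^ 2 := by nlinarith
  rw [signalPowerDensity, if_pos (Ioo_subset_Icc_self hα)]
  have : 0 < √(V ^ 2 / (ζ * α - V ^ 2 * α ^ 2)) := Real.sqrt_pos.2 (by positivity)
  positivity

lemma integral_signalPowerDensity_mul (hab : cos (π / μn) ^ 2 * ζ / V ^ 2 ≤ ζ / V ^ 2)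
    (h : ℝ → ℝ) :
    ∫ α, signalPowerDensity μn V ζ α * h α
      = μn / (2 * π) * ∫ α in (cos (π / μn) ^ 2 * ζ / V ^ 2)..(ζ / V ^ 2),
          √(V ^ 2 / (ζ * α - V ^ 2 * α ^ 2)) * h α := by
  have hind : (fun α => signalPowerDensity μn V ζ α * h α)
      = (Icc (cos (π / μn) ^ 2 * ζ / V ^ 2) (ζ / V ^ 2)).indicator
          fun α => μn / (2 * π) * (√(V ^ 2 / (ζ * α - V ^ 2 * α ^ 2)) * h α) := by
    ext α
    simp only [signalPowerDensity, indicator_apply, ite_mul, zero_mul, mul_assoc]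
  rw [hind, integral_indicator measurableSet_Icc, integral_Icc_eq_integral_Ioc,
    ← intervalIntegral.integral_of_le hab, intervalIntegral.integral_const_mul]

lemma toReal_lintegral_withDensity_signalPowerDensity
    [IsProbabilityMeasure
      (volume.withDensity fun α => ENNReal.ofReal (signalPowerDensity μn V ζ α))]
    (hab : cos (π / μn) ^ 2 * ζ / V ^ 2 ≤ ζ / V ^ 2) {h : ℝ → ℝ} (hh : Measurable h)
    (hh0 : ∀ α, 0 ≤ h α) (hh1 : ∀ α, h α ≤ 1) (hZ : 0 ≤ Z) {g : ℝ → ENNReal}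
    (hg : ∀ α, signalPowerDensity μn V ζ α ≠ 0 → g α = ENNReal.ofReal ((1 - h α) / Z)) :
    (∫⁻ α, g α ∂volume.withDensity fun α => ENNReal.ofReal (signalPowerDensity μn V ζ α)).toReal
      = (1 - μn / (2 * π) * ∫ α in (cos (π / μn) ^ 2 * ζ / V ^ 2)..(ζ / V ^ 2),
          √(V ^ 2 / (ζ * α - V ^ 2 * α ^ 2)) * h α) / Z := by
  rw [toReal_lintegral_withDensity_ofReal_eq_integral_mul (T := fun α => (1 - h α) / Z)
    measurable_signalPowerDensity signalPowerDensity_nonneg ((measurable_const.sub hh).div_const Z)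
    (fun α => div_nonneg (sub_nonneg.2 (hh1 α)) hZ) hg]
  simp only [← mul_div_assoc]
  rw [integral_div, integral_mul_one_sub_of_integral_eq_one
    (integral_eq_one_of_withDensity_ofReal measurable_signalPowerDensity.aestronglyMeasurable
      signalPowerDensity_nonneg)
    hh.aestronglyMeasurable (fun α => abs_le.2 ⟨by linarith [hh0 α], hh1 α⟩),
    integral_signalPowerDensity_mul hab]

lemma measurable_truncGaussianDensity : Measurable (truncGaussianDensity Z κ ω c) :=
  Measurable.ite measurableSet_Ici (by fun_prop) measurable_const

lemma truncGaussianDensity_pos (hZ : 0 < Z) (hκ : κ ≠ 0) {x : ℝ} (hx : c ≤ x) :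
    0 < truncGaussianDensity Z κ ω c x := by
  rw [truncGaussianDensity, if_pos hx]
  have : 0 < √(2 * π * κ ^ 2) := Real.sqrt_pos.2 (by positivity)
  positivity

lemma truncGaussianDensity_of_lt {x : ℝ} (hx : x < c) : truncGaussianDensity Z κ ω c x = 0 :=
  if_neg hx.not_ge

lemma integrable_exp_neg_sub_sq_div (hκ : κ ≠ 0) (m : ℝ) :
    Integrable fun x => exp (-(x - m) ^ 2 / (2 * κ ^ 2)) := by
  have hexp (x : ℝ) : exp (-(x - m) ^ 2 / (2 * κ ^ 2)) = exp (-(2 * κ ^ 2)⁻¹ * (x - m) ^ 2) := by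
    ring_nf
  simpa only [hexp] using (integrable_exp_neg_mul_sq (by positivity)).comp_sub_right m

lemma withDensity_truncGaussianDensity_Ici (hZ : 0 ≤ Z) (hκ : 0 < κ) {t : ℝ} (ht : c ≤ t) :
    volume.withDensity (fun x => ENNReal.ofReal (truncGaussianDensity Z κ ω c x)) (Ici t)
      = ENNReal.ofReal ((1 - stdNormalCDF ((t - ω - c) / κ)) / Z) := by
  have hdens : EqOn (fun x => ENNReal.ofReal (truncGaussianDensity Z κ ω c x))
      (fun x => ENNReal.ofReal ((Z * √(2 * π * κ ^ 2))⁻¹ * exp (-(x - (ω + c)) ^ 2 / (2 * κ ^ 2))))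
      (Ici t) := fun x hx => by
    simp only [truncGaussianDensity, if_pos (ht.trans hx), sub_sub]
  rw [withDensity_apply _ measurableSet_Ici, setLIntegral_congr_fun measurableSet_Ici hdens,
    ← ofReal_integral_eq_lintegral_ofReal
      ((integrable_exp_neg_sub_sq_div hκ.ne' _).const_mul _).integrableOn
      (ae_of_all _ fun x => by positivity),
    integral_const_mul, integral_Ici_eq_integral_Ioi, integral_Ioi_exp_neg_sub_sq_div hκ,
    Real.sqrt_mul (by positivity), Real.sqrt_sq hκ.le, sub_sub]
  congr 1
  field_simp

end Densities

lemma sin_pi_div_pos {n : ℕ} (hn : 2 ≤ n) : 0 < sin (π / n) := by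
  have hn' : (1 : ℝ) < n := by exact_mod_cast hn
  exact sin_pos_of_pos_of_lt_pi (by positivity) (div_lt_self pi_pos hn')

lemma cos_sq_pi_div_mul_div_lt_div {n : ℕ} (hn : 2 ≤ n) {ζ V : ℝ} (hζ : 0 < ζ) (hV : V ≠ 0) :
    cos (π / n) ^ 2 * ζ / V ^ 2 < ζ / V ^ 2 := by
  have hcos : cos (π / n) ^ 2 < 1 := by
    rw [cos_sq']
    linarith [pow_pos (sin_pi_div_pos hn) 2]
  gcongr
  exact mul_lt_of_lt_one_left hζ hcos

theorem cuma_outage_probability_single_integral_general {Ω : Type*} [MeasureSpace Ω]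
    [IsProbabilityMeasure (ℙ : Measure Ω)]
    (μn W : ℕ) (hμ2 : 2 ≤ μn) (hW : 1 ≤ W)
    (V ζ ω κ c : ℝ) (hV : V = Real.sin (π / μn) / W)
    (hζ : 0 < ζ) (hκ : 0 < κ) (hc : 0 ≤ c)
    (A B : Ω → ℝ) (hindep : IndepFun A B ℙ)
    (hlawA : Measure.map A ℙ = volume.withDensity (fun α => ENNReal.ofReal
        (if α ∈ Set.Icc (Real.cos (π / μn) ^ 2 * ζ / V ^ 2) (ζ / V ^ 2)
          then μn / (2 * π) * Real.sqrt (V ^ 2 / (ζ * α - V ^ 2 * α ^ 2))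
          else 0)))
    (hlawB : Measure.map B ℙ = volume.withDensity (fun x => ENNReal.ofReal
        (if c ≤ x
          then (stdNormalCDF (ω / κ) * Real.sqrt (2 * π * κ ^ 2))⁻¹ *
            Real.exp (-(x - ω - c) ^ 2 / (2 * κ ^ 2))
          else 0)))
    (γ : ℝ) (hγ : 0 < γ) (hγc : c ≤ Real.cos (π / μn) ^ 2 * ζ / (γ * V ^ 2)) :
    (ℙ {x | A x / B x ≤ γ}).toReal
      = 1 / stdNormalCDF (ω / κ)
        - μn / (2 * π * stdNormalCDF (ω / κ)) *
          ∫ α in (Real.cos (π / μn) ^ 2 * ζ / V ^ 2)..(ζ / V ^ 2),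
            Real.sqrt (V ^ 2 / (ζ * α - V ^ 2 * α ^ 2)) *
              stdNormalCDF ((α / γ - ω - c) / κ) := by
  change Measure.map A ℙ = volume.withDensity fun α => ENNReal.ofReal (signalPowerDensity μn V ζ α)
    at hlawA
  change Measure.map B ℙ = volume.withDensity fun x =>
    ENNReal.ofReal (truncGaussianDensity (stdNormalCDF (ω / κ)) κ ω c x) at hlawB
  have hΦ := stdNormalCDF_pos (ω / κ)
  have hV0 : V ≠ 0 := hV ▸ div_ne_zero (sin_pi_div_pos hμ2).ne' (by positivity)
  have hab := cos_sq_pi_div_mul_div_lt_div hμ2 hζ hV0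
  have hA : AEMeasurable A ℙ := aemeasurable_of_map_eq_withDensity hlawA
    measurable_signalPowerDensity hab fun α hα => signalPowerDensity_pos (by omega) hV0 hζ.le hα
  have hB : AEMeasurable B ℙ := aemeasurable_of_map_eq_withDensity hlawB
    measurable_truncGaussianDensity (lt_add_one c)
      fun x hx => truncGaussianDensity_pos hΦ hκ.ne' hx.1.le
  have hBpos := ae_pos_of_map_eq_withDensity hB hlawB
    fun x hx => truncGaussianDensity_of_lt (hx.trans_le hc)
  have : IsProbabilityMeasure (volume.withDensity fun α =>
      ENNReal.ofReal (signalPowerDensity μn V ζ α)) := hlawA ▸ Measure.isProbabilityMeasure_map hA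
  have htail (α : ℝ) (hα : signalPowerDensity μn V ζ α ≠ 0) : Measure.map B ℙ (Ici (α / γ))
      = ENNReal.ofReal ((1 - stdNormalCDF ((α / γ - ω - c) / κ)) / stdNormalCDF (ω / κ)) := by
    refine hlawB ▸ withDensity_truncGaussianDensity_Ici hΦ.le hκ (hγc.trans ?_)
    rw [mul_comm γ, ← div_div]
    exact div_le_div_of_nonneg_right (mem_Icc_of_signalPowerDensity_ne_zero hα).1 hγ.le
  rw [hindep.measure_div_le_eq_lintegral hA hB hBpos hγ, hlawA,
    toReal_lintegral_withDensity_signalPowerDensity hab.le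
      (h := fun α => stdNormalCDF ((α / γ - ω - c) / κ))
      (monotone_stdNormalCDF.measurable.comp (by fun_prop)) (fun _ => (stdNormalCDF_pos _).le)
      (fun _ => stdNormalCDF_le_one _) hΦ.le htail]
  field_simp

/-- Corollary 4: the exact outage probability of the typical user in single-integral
form.  `A` models the CUMA signal power and `B` the interference-plus-noise power
(a truncated Gaussian shifted by the noise term `c`). -/
theorem cuma_outage_probability_single_integral {Ω : Type*} [MeasureSpace Ω]
    [IsProbabilityMeasure (ℙ : Measure Ω)]
    (μn W : ℕ) (hμ2 : 2 ≤ μn) (hμe : Even μn) (hW : 1 ≤ W)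
    (V ζ ω κ c : ℝ) (hV : V = Real.sin (π / μn) / W)
    (hζ : 0 < ζ) (hω : 0 < ω) (hκ : 0 < κ) (hc : 0 ≤ c)
    (A B : Ω → ℝ) (hindep : IndepFun A B ℙ)
    (hlawA : Measure.map A ℙ = volume.withDensity (fun α => ENNReal.ofReal
        (if α ∈ Set.Icc (Real.cos (π / μn) ^ 2 * ζ / V ^ 2) (ζ / V ^ 2)
          then μn / (2 * π) * Real.sqrt (V ^ 2 / (ζ * α - V ^ 2 * α ^ 2))
          else 0)))
    (hlawB : Measure.map B ℙ = volume.withDensity (fun x => ENNReal.ofReal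
        (if c ≤ x
          then (stdNormalCDF (ω / κ) * Real.sqrt (2 * π * κ ^ 2))⁻¹ *
            Real.exp (-(x - ω - c) ^ 2 / (2 * κ ^ 2))
          else 0)))
    (γ : ℝ) (hγ : 0 < γ) (hγc : c ≤ Real.cos (π / μn) ^ 2 * ζ / (γ * V ^ 2)) :
    (ℙ {x | A x / B x ≤ γ}).toReal
      = 1 / stdNormalCDF (ω / κ)
        - μn / (2 * π * stdNormalCDF (ω / κ)) *
          ∫ α in (Real.cos (π / μn) ^ 2 * ζ / V ^ 2)..(ζ / V ^ 2),
            Real.sqrt (V ^ 2 / (ζ * α - V ^ 2 * α ^ 2)) *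
              stdNormalCDF ((α / γ - ω - c) / κ) :=
  cuma_outage_probability_single_integral_general μn W hμ2 hW V ζ ω κ c hV hζ hκ hc A B hindep hlawA
    hlawB γ hγ hγc
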